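/- arXiv:1401.1709 — 3 statements merged into one kernel-verified Lean document; each statement's English description precedes it below -/
import Mathlib

section
/- Let (X,d) be a regular semimetric space. Then every convergent sequence in X has the Cauchy property: if (x_n) is a sequence in X and x ∈ X with d(x_n, x) → 0 as n → ∞, then for every ε > 0 there exists N such that d(x_n, x_m) < ε for all n, m ≥ N. -/
open Filter Topology

/-- A semimetric on `X`: a symmetric nonnegative function vanishing exactly on the diagonal. -/
def IsSemimetric {X : Type*} (d : X → X → NNReal) : Prop :=
  (∀ x y, d x y = d y x) ∧ (∀ x y, d x y = 0 ↔ x = y)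

/-- The basic triangle function `Φ_d(u,v) = sup { d x y | ∃ p, d p x ≤ u ∧ d p y ≤ v }`. -/
noncomputable def basicTriangle {X : Type*} (d : X → X → NNReal) (u v : ENNReal) : ENNReal :=
  sSup {w : ENNReal | ∃ x y p : X, w = (d x y : ENNReal) ∧ (d p x : ENNReal) ≤ u ∧ (d p y : ENNReal) ≤ v}

/-- `Φ` is a triangle function for `d`: symmetric, monotone increasing in both arguments,
`Φ(0,0) = 0`, and the generalized triangle inequality holds. -/
def IsTriangleFun {X : Type*} (d : X → X → NNReal) (Φ : ENNReal → ENNReal → ENNReal) : Prop :=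
  (∀ u v, Φ u v = Φ v u) ∧
  (∀ v, Monotone fun u => Φ u v) ∧
  (∀ u, Monotone fun v => Φ u v) ∧
  Φ 0 0 = 0 ∧
  ∀ x y z : X, (d x y : ENNReal) ≤ Φ (d x z) (d y z)

/-- A semimetric is regular if its basic triangle function is continuous at the origin. -/
def IsRegularSemimetric {X : Type*} (d : X → X → NNReal) : Prop :=
  ContinuousAt (fun p : ENNReal × ENNReal => basicTriangle d p.1 p.2) (0, 0)

/-- Convergence of a sequence with respect to a semimetric. -/
def SConv {X : Type*} (d : X → X → NNReal) (x : ℕ → X) (a : X) : Prop :=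
  Tendsto (fun n => d (x n) a) atTop (𝓝 0)

/-- Cauchy property of a sequence with respect to a semimetric. -/
def SCauchy {X : Type*} (d : X → X → NNReal) (x : ℕ → X) : Prop :=
  ∀ ε : NNReal, 0 < ε → ∃ N, ∀ n m, N ≤ n → N ≤ m → d (x n) (x m) < ε

/-- Completeness of a semimetric space: every Cauchy sequence converges. -/
def SComplete {X : Type*} (d : X → X → NNReal) : Prop :=
  ∀ x : ℕ → X, SCauchy d x → ∃ a, SConv d x a

/-- The smallest Lipschitz modulus `L_{d₁,d₂}(t) = sup { d₁ x y | d₂ x y ≤ t }`. -/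
noncomputable def Lmod {X : Type*} (d₁ d₂ : X → X → NNReal) (t : ENNReal) : ENNReal :=
  sSup {w : ENNReal | ∃ x y : X, w = (d₁ x y : ENNReal) ∧ (d₂ x y : ENNReal) ≤ t}

/-- Equivalence of semimetrics: both minimal Lipschitz moduli tend to `0` at `0⁺`. -/
def SEquiv {X : Type*} (d₁ d₂ : X → X → NNReal) : Prop :=
  Tendsto (Lmod d₁ d₂) (𝓝[>] (0 : ENNReal)) (𝓝 0) ∧
  Tendsto (Lmod d₂ d₁) (𝓝[>] (0 : ENNReal)) (𝓝 0)

/-- A comparison function: monotone increasing with iterates tending to zero pointwise. -/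
def IsComparison (φ : NNReal → NNReal) : Prop :=
  Monotone φ ∧ ∀ t : NNReal, Tendsto (fun n => φ^[n] t) atTop (𝓝 0)

/-- `T` is a `φ`-contraction with respect to the semimetric `d`. -/
def IsPhiContraction {X : Type*} (d : X → X → NNReal) (φ : NNReal → NNReal) (T : X → X) : Prop :=
  ∀ x y, d (T x) (T y) ≤ φ (d x y)

section Semimetric

variable {X : Type*} (d : X → X → NNReal)

theorem le_basicTriangle (p x y : X) :
    (d x y : ENNReal) ≤ basicTriangle d (d p x) (d p y) :=
  le_sSup ⟨x, y, p, rfl, le_rfl, le_rfl⟩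

variable {d}

theorem basicTriangle_zero_zero (hzero : ∀ x y, d x y = 0 ↔ x = y) :
    basicTriangle d 0 0 = 0 := by
  refine le_antisymm (sSup_le ?_) zero_le
  rintro w ⟨x, y, p, rfl, hpx, hpy⟩
  have hx : p = x := (hzero p x).mp (by exact_mod_cast nonpos_iff_eq_zero.mp hpx)
  have hy : p = y := (hzero p y).mp (by exact_mod_cast nonpos_iff_eq_zero.mp hpy)
  subst hx hy
  simp [(hzero p p).mpr rfl]

theorem IsRegularSemimetric.tendsto_basicTriangle (hreg : IsRegularSemimetric d)
    (hzero : ∀ x y, d x y = 0 ↔ x = y) :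
    Tendsto (fun p : ENNReal × ENNReal => basicTriangle d p.1 p.2) (𝓝 (0, 0)) (𝓝 0) := by
  simpa only [basicTriangle_zero_zero hzero] using hreg.tendsto

theorem sCauchy_of_tendsto_atTop_prod {x : ℕ → X}
    (h : Tendsto (fun n : ℕ × ℕ => d (x n.1) (x n.2)) (atTop ×ˢ atTop) (𝓝 0)) :
    SCauchy d x := by
  intro ε hε
  have hsmall := h.eventually (gt_mem_nhds hε)
  rw [prod_atTop_atTop_eq] at hsmall
  obtain ⟨N, hN⟩ := eventually_atTop_prod_self'.mp hsmall
  exact ⟨N, fun n m hn hm => hN n hn m hm⟩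

end Semimetric

-- `d(xₙ, xₘ) ≤ Φ(d(a, xₙ), d(a, xₘ))`, and by regularity the right side tends to `Φ(0,0) = 0`.
theorem regular_conv_cauchy_general {X : Type*}
    (d : X → X → NNReal) (hd : IsSemimetric d) (hreg : IsRegularSemimetric d)
    (x : ℕ → X) (a : X) (ha : SConv d x a) :
    SCauchy d x := by
  obtain ⟨hsymm, hzero⟩ := hd
  have hdist : Tendsto (fun n => (d a (x n) : ENNReal)) atTop (𝓝 0) := by
    simpa only [hsymm a, ENNReal.coe_zero] using ENNReal.tendsto_coe.mpr ha
  have hpair : Tendsto (fun n : ℕ × ℕ => ((d a (x n.1) : ENNReal), (d a (x n.2) : ENNReal)))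
      (atTop ×ˢ atTop) (𝓝 (0, 0)) :=
    (hdist.comp tendsto_fst).prodMk_nhds (hdist.comp tendsto_snd)
  have hbound := (hreg.tendsto_basicTriangle hzero).comp hpair
  refine sCauchy_of_tendsto_atTop_prod (ENNReal.tendsto_coe.mp ?_)
  exact tendsto_of_tendsto_of_tendsto_of_le_of_le tendsto_const_nhds hbound
    (fun _ => zero_le) (fun n => le_basicTriangle d a (x n.1) (x n.2))

theorem regular_conv_cauchy {X : Type*} [Nonempty X]
    (d : X → X → NNReal) (hd : IsSemimetric d) (hreg : IsRegularSemimetric d)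
    (x : ℕ → X) (a : X) (ha : SConv d x a) :
    SCauchy d x :=
  regular_conv_cauchy_general d hd hreg x a ha
end

section
/- Let d₁ and d₂ be equivalent semimetrics on a nonempty set X. Then (X,d₁) is regular (its basic triangle function Φ_{d₁} is continuous at the origin) if and only if (X,d₂) is regular. -/
open Filter Topology

/-!
Regularity of `d` amounts to `Φ_d(u,u) → 0` as `u → 0`, because `Φ_d` is monotone and
`Φ_d(0,0) = 0`. Unfolding the suprema gives
`Φ_{d₁}(u,u) ≤ L_{d₁,d₂}(Φ_{d₂}(L_{d₂,d₁} u, L_{d₂,d₁} u))`, and for equivalent semimetrics each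
of the three maps on the right tends to `0` at `0`, so regularity of `d₂` transfers to `d₁`.
-/

theorem continuousAt_bot_of_continuousWithinAt_Ioi {α β : Type*} [PartialOrder α] [OrderBot α]
    [TopologicalSpace α] [TopologicalSpace β] {f : α → β}
    (h : ContinuousWithinAt f (Set.Ioi ⊥) ⊥) : ContinuousAt f ⊥ := by
  rwa [continuousWithinAt_Ioi_iff_Ici, Set.Ici_bot, continuousWithinAt_univ] at h

/-- Squeeze `f (⊥, ⊥) ≤ f p ≤ f (max p.1 p.2, max p.1 p.2)`. -/
theorem Monotone.continuousAt_bot_iff_tendsto_diag {α β : Type*} [LinearOrder α] [OrderBot α]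
    [TopologicalSpace α] [OrderTopology α] [TopologicalSpace β] [Preorder β] [OrderTopology β]
    {f : α × α → β} (hf : Monotone f) :
    ContinuousAt f (⊥, ⊥) ↔ Tendsto (fun a => f (a, a)) (𝓝 ⊥) (𝓝 (f (⊥, ⊥))) := by
  constructor
  · intro h
    exact h.tendsto.comp ((continuous_id.prodMk continuous_id).tendsto' ⊥ (⊥, ⊥) rfl)
  · intro h
    have hmax : Tendsto (fun p : α × α => max p.1 p.2) (𝓝 (⊥, ⊥)) (𝓝 ⊥) :=
      continuous_max.tendsto' (⊥, ⊥) ⊥ (max_self ⊥)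
    exact tendsto_of_tendsto_of_tendsto_of_le_of_le tendsto_const_nhds (h.comp hmax)
      (fun p => hf bot_le) (fun p => hf ⟨le_max_left _ _, le_max_right _ _⟩)

section Semimetric

variable {X : Type*}

theorem basicTriangle_monotone (d : X → X → NNReal) :
    Monotone (fun p : ENNReal × ENNReal => basicTriangle d p.1 p.2) := by
  rintro p q ⟨hpq₁, hpq₂⟩
  apply sSup_le_sSup
  rintro w ⟨x, y, r, rfl, hx, hy⟩
  exact ⟨x, y, r, rfl, hx.trans hpq₁, hy.trans hpq₂⟩

theorem IsSemimetric.eq_of_coe_le_zero {d : X → X → NNReal} (h : IsSemimetric d) {x y : X}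
    (hxy : (d x y : ENNReal) ≤ 0) : x = y :=
  (h.2 x y).1 (by exact_mod_cast le_antisymm hxy zero_le)

theorem basicTriangle_zero_zero_s12 {d : X → X → NNReal} (h : IsSemimetric d) :
    basicTriangle d 0 0 = 0 := by
  refine le_antisymm (sSup_le ?_) zero_le
  rintro w ⟨x, y, p, rfl, hx, hy⟩
  obtain rfl := h.eq_of_coe_le_zero hx
  obtain rfl := h.eq_of_coe_le_zero hy
  simp [(h.2 p p).2 rfl]

theorem Lmod_zero {d₁ d₂ : X → X → NNReal} (h₁ : IsSemimetric d₁) (h₂ : IsSemimetric d₂) :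
    Lmod d₁ d₂ 0 = 0 := by
  refine le_antisymm (sSup_le ?_) zero_le
  rintro w ⟨x, y, rfl, hxy⟩
  obtain rfl := h₂.eq_of_coe_le_zero hxy
  simp [(h₁.2 x x).2 rfl]

theorem tendsto_Lmod_nhds_zero {d₁ d₂ : X → X → NNReal} (h₁ : IsSemimetric d₁)
    (h₂ : IsSemimetric d₂) (h : Tendsto (Lmod d₁ d₂) (𝓝[>] 0) (𝓝 0)) :
    Tendsto (Lmod d₁ d₂) (𝓝 0) (𝓝 0) := by
  have hcont : ContinuousAt (Lmod d₁ d₂) ⊥ := by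
    apply continuousAt_bot_of_continuousWithinAt_Ioi
    rwa [ContinuousWithinAt, ENNReal.bot_eq_zero, Lmod_zero h₁ h₂]
  rwa [ContinuousAt, ENNReal.bot_eq_zero, Lmod_zero h₁ h₂] at hcont

theorem isRegularSemimetric_iff_tendsto_diag {d : X → X → NNReal} (h : IsSemimetric d) :
    IsRegularSemimetric d ↔ Tendsto (fun u => basicTriangle d u u) (𝓝 0) (𝓝 0) := by
  have := (basicTriangle_monotone d).continuousAt_bot_iff_tendsto_diag
  simp only [ENNReal.bot_eq_zero, basicTriangle_zero_zero_s12 h] at this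
  exact this

theorem basicTriangle_le_Lmod (d₁ d₂ : X → X → NNReal) (u v : ENNReal) :
    basicTriangle d₁ u v ≤
      Lmod d₁ d₂ (basicTriangle d₂ (Lmod d₂ d₁ u) (Lmod d₂ d₁ v)) := by
  apply sSup_le
  rintro w ⟨x, y, p, rfl, hpx, hpy⟩
  exact le_sSup ⟨x, y, rfl,
    le_sSup ⟨x, y, p, rfl, le_sSup ⟨p, x, rfl, hpx⟩, le_sSup ⟨p, y, rfl, hpy⟩⟩⟩

theorem SEquiv.symm {d₁ d₂ : X → X → NNReal} (h : SEquiv d₁ d₂) : SEquiv d₂ d₁ :=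
  ⟨h.2, h.1⟩

theorem IsRegularSemimetric.of_sEquiv {d₁ d₂ : X → X → NNReal} (h₁ : IsSemimetric d₁)
    (h₂ : IsSemimetric d₂) (heq : SEquiv d₁ d₂) (hr : IsRegularSemimetric d₂) :
    IsRegularSemimetric d₁ := by
  rw [isRegularSemimetric_iff_tendsto_diag h₁]
  have hL₁₂ := tendsto_Lmod_nhds_zero h₁ h₂ heq.1
  have hL₂₁ := tendsto_Lmod_nhds_zero h₂ h₁ heq.2
  have hΦ₂ := (isRegularSemimetric_iff_tendsto_diag h₂).1 hr
  exact tendsto_of_tendsto_of_tendsto_of_le_of_le tendsto_const_nhds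
    (hL₁₂.comp (hΦ₂.comp hL₂₁)) (fun _ => zero_le) (fun u => basicTriangle_le_Lmod d₁ d₂ u u)

end Semimetric

theorem equiv_regular_iff_general {X : Type*}
    (d₁ d₂ : X → X → NNReal) (h₁ : IsSemimetric d₁) (h₂ : IsSemimetric d₂)
    (heq : SEquiv d₁ d₂) :
    IsRegularSemimetric d₁ ↔ IsRegularSemimetric d₂ :=
  ⟨fun h => h.of_sEquiv h₂ h₁ heq.symm, fun h => h.of_sEquiv h₁ h₂ heq⟩

theorem equiv_regular_iff {X : Type*} [Nonempty X]
    (d₁ d₂ : X → X → NNReal) (h₁ : IsSemimetric d₁) (h₂ : IsSemimetric d₂)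
    (heq : SEquiv d₁ d₂) :
    IsRegularSemimetric d₁ ↔ IsRegularSemimetric d₂ :=
  equiv_regular_iff_general d₁ d₂ h₁ h₂ heq
end

section
/- Let c ≥ 1, let X be a nonempty set, and let d be a semimetric on X which is equivalent to a semimetric ρ on X, where (X,ρ) is a complete c-relaxed metric space (i.e., ρ satisfies ρ(x,y) ≤ c(ρ(x,z) + ρ(z,y)) for all x,y,z ∈ X and every ρ-Cauchy sequence ρ-converges). If φ : ℝ₊ → ℝ₊ is a comparison function, then every φ-contraction T : X → X with respect to d has a unique fixed point. -/
open Filter Topology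

/-!
Equivalence with a `c`-relaxed metric makes `d` regular: points `η`-close to a common point are
`ε`-close to each other. Regularity replaces the triangle inequality in Matkowski's argument.
Given `ε`, take regularity moduli `ε → η₁ → η₂ → η₃` and `k` with `φᵏ(η₂) ≤ η₃`. A late orbit
point `y` has `d(y, Tʳ y) ≤ η₃` for `r ≤ k`; by induction on `j`, `T^{kj} y` stays `η₂`-close to
`y`, so after `r < k` further steps the whole tail stays `η₁`-close to `y`, and any two tail points
are `ε`-close. The `d`-Cauchy orbit is `ρ`-Cauchy; its `ρ`-limit is a `d`-limit, and it is fixed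
because `d`-limits are unique.
-/

/-- `ε`-`η` form of `IsRegularSemimetric`: `Φ_d(η, η) < ε` for small enough `η`. -/
def SRegular {X : Type*} (d : X → X → NNReal) : Prop :=
  ∀ ε : NNReal, 0 < ε → ∃ η : NNReal, 0 < η ∧ ∀ p a b, d p a ≤ η → d p b ≤ η → d a b < ε

section

variable {X : Type*} {d : X → X → NNReal} {φ : NNReal → NNReal} {T : X → X}

theorem SRegular.exists_le (hreg : SRegular d) {ε : NNReal} (hε : 0 < ε) :
    ∃ η : NNReal, 0 < η ∧ η ≤ ε ∧ ∀ p a b, d p a ≤ η → d p b ≤ η → d a b < ε := by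
  obtain ⟨η, hη, hK⟩ := hreg ε hε
  exact ⟨min η ε, lt_min hη hε, min_le_right _ _, fun p a b hpa hpb =>
    hK p a b (hpa.trans (min_le_left _ _)) (hpb.trans (min_le_left _ _))⟩

theorem SConv.unique_of_sRegular (hreg : SRegular d) (hd : ∀ x y, d x y = 0 → x = y)
    {u : ℕ → X} {a b : X} (ha : SConv d u a) (hb : SConv d u b) : a = b := by
  refine hd a b (by_contra fun hne => ?_)
  have hpos : 0 < d a b := pos_iff_ne_zero.2 hne
  obtain ⟨η, hη, hK⟩ := hreg _ hpos
  obtain ⟨n, hna, hnb⟩ :=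
    ((ha.eventually (ge_mem_nhds hη)).and (hb.eventually (ge_mem_nhds hη))).exists
  exact (hK (u n) a b hna hnb).false

theorem exists_pos_forall_lt_of_tendsto_Lmod {d₁ d₂ : X → X → NNReal}
    (h : Tendsto (Lmod d₁ d₂) (𝓝[>] 0) (𝓝 0)) {ε : NNReal} (hε : 0 < ε) :
    ∃ δ : NNReal, 0 < δ ∧ ∀ x y, d₂ x y ≤ δ → d₁ x y < ε := by
  obtain ⟨t, hLt, ht⟩ := ((h.eventually (gt_mem_nhds (ENNReal.coe_pos.2 hε))).and
    self_mem_nhdsWithin).exists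
  obtain ⟨δ, hδ, hδt⟩ := ENNReal.lt_iff_exists_nnreal_btwn.1 (Set.mem_Ioi.1 ht)
  refine ⟨δ, ENNReal.coe_pos.1 hδ, fun x y hxy => ?_⟩
  have hLmod : (d₁ x y : ENNReal) ≤ Lmod d₁ d₂ t :=
    le_sSup ⟨x, y, rfl, (ENNReal.coe_le_coe.2 hxy).trans hδt.le⟩
  exact ENNReal.coe_lt_coe.1 (hLmod.trans_lt hLt)

theorem SCauchy.of_tendsto_Lmod {d₁ d₂ : X → X → NNReal}
    (h : Tendsto (Lmod d₁ d₂) (𝓝[>] 0) (𝓝 0)) {u : ℕ → X} (hu : SCauchy d₂ u) :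
    SCauchy d₁ u := by
  intro ε hε
  obtain ⟨δ, hδ, hδε⟩ := exists_pos_forall_lt_of_tendsto_Lmod h hε
  obtain ⟨N, hN⟩ := hu δ hδ
  exact ⟨N, fun n m hn hm => hδε _ _ (hN n m hn hm).le⟩

theorem SConv.of_tendsto_Lmod {d₁ d₂ : X → X → NNReal}
    (h : Tendsto (Lmod d₁ d₂) (𝓝[>] 0) (𝓝 0)) {u : ℕ → X} {a : X} (hu : SConv d₂ u a) :
    SConv d₁ u a := by
  refine (tendsto_order.2 ⟨fun _ hε => (not_lt_zero hε).elim, fun ε hε => ?_⟩)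
  obtain ⟨δ, hδ, hδε⟩ := exists_pos_forall_lt_of_tendsto_Lmod h hε
  exact (hu.eventually (ge_mem_nhds hδ)).mono fun n hn => hδε _ _ hn

theorem SRegular.of_sEquiv_of_relaxed {ρ : X → X → NNReal} {c : NNReal}
    (hsymm : ∀ x y, d x y = d y x) (hrel : ∀ x y z, ρ x y ≤ c * (ρ x z + ρ z y))
    (heq : SEquiv d ρ) : SRegular d := by
  intro ε hε
  obtain ⟨δ, hδ, hρd⟩ := exists_pos_forall_lt_of_tendsto_Lmod heq.1 hε
  obtain ⟨η, hη, hdρ⟩ := exists_pos_forall_lt_of_tendsto_Lmod heq.2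
    (show 0 < δ / (2 * c + 1) by positivity)
  refine ⟨η, hη, fun p a b hpa hpb => hρd a b ?_⟩
  calc ρ a b ≤ c * (ρ a p + ρ p b) := hrel a b p
    _ ≤ c * (δ / (2 * c + 1) + δ / (2 * c + 1)) := by
      gcongr
      exacts [(hdρ a p ((hsymm a p).trans_le hpa)).le, (hdρ p b hpb).le]
    _ = 2 * c / (2 * c + 1) * δ := by ring
    _ ≤ δ := mul_le_of_le_one_left zero_le (div_le_one_of_le₀ le_self_add zero_le)

theorem IsComparison.eq_zero_of_le_apply (hφ : IsComparison φ) {t : NNReal} (ht : t ≤ φ t) :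
    t = 0 := by
  have hiter : ∀ n, t ≤ φ^[n] t := fun n => by
    induction n with
    | zero => rfl
    | succ n ih => exact ht.trans ((hφ.1 ih).trans_eq (Function.iterate_succ_apply' φ n t).symm)
  exact nonpos_iff_eq_zero.1 (ge_of_tendsto' (hφ.2 t) hiter)

theorem IsComparison.apply_le (hφ : IsComparison φ) (t : NNReal) : φ t ≤ t := by
  by_contra! h
  have hφt : φ t = 0 := hφ.eq_zero_of_le_apply (hφ.1 h.le)
  exact not_lt_zero (hφt ▸ h)

theorem IsComparison.iterate_le (hφ : IsComparison φ) (n : ℕ) (t : NNReal) : φ^[n] t ≤ t := by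
  induction n with
  | zero => rfl
  | succ n ih => exact (Function.iterate_succ_apply' φ n t).trans_le ((hφ.apply_le _).trans ih)

theorem IsPhiContraction.iterate (hφ : Monotone φ) (hT : IsPhiContraction d φ T) (n : ℕ) :
    IsPhiContraction d (φ^[n]) (T^[n]) := by
  induction n with
  | zero => exact fun x y => le_rfl
  | succ n ih =>
    intro x y
    rw [Function.iterate_succ_apply, Function.iterate_succ_apply, Function.iterate_succ_apply]
    exact (ih _ _).trans (hφ.iterate n (hT x y))

theorem IsPhiContraction.tendsto_iterate (hφ : IsComparison φ) (hT : IsPhiContraction d φ T)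
    (x y : X) : Tendsto (fun n => d (T^[n] x) (T^[n] y)) atTop (𝓝 0) :=
  tendsto_of_tendsto_of_tendsto_of_le_of_le tendsto_const_nhds (hφ.2 (d x y)) (fun _ => zero_le)
    fun n => hT.iterate hφ.1 n x y

theorem IsPhiContraction.sConv_comp (hφ : IsComparison φ) (hT : IsPhiContraction d φ T)
    {u : ℕ → X} {a : X} (hu : SConv d u a) : SConv d (T ∘ u) (T a) :=
  tendsto_of_tendsto_of_tendsto_of_le_of_le tendsto_const_nhds hu (fun _ => zero_le)
    fun n => (hT (u n) a).trans (hφ.apply_le _)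

theorem IsPhiContraction.eq_of_isFixedPt (hφ : IsComparison φ) (hT : IsPhiContraction d φ T)
    (hd : ∀ x y, d x y = 0 → x = y) {x y : X} (hx : T x = x) (hy : T y = y) : x = y :=
  hd x y (hφ.eq_zero_of_le_apply (by simpa only [hx, hy] using hT x y))

theorem IsPhiContraction.dist_iterate_mul_le (hφ : Monotone φ) (hT : IsPhiContraction d φ T)
    (hsymm : ∀ x y, d x y = d y x) (hrefl : ∀ x, d x x = 0) {k : ℕ} {y : X} {η δ : NNReal}
    (hK : ∀ p a b, d p a ≤ δ → d p b ≤ δ → d a b < η) (hk : φ^[k] η ≤ δ)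
    (hy : d y (T^[k] y) ≤ δ) (j : ℕ) : d y (T^[k * j] y) ≤ η := by
  induction j with
  | zero => simp only [mul_zero, Function.iterate_zero_apply, hrefl, zero_le]
  | succ j ih =>
    have hstep : T^[k * (j + 1)] y = T^[k] (T^[k * j] y) := by
      rw [← Function.iterate_add_apply, Nat.mul_succ, add_comm]
    rw [hstep]
    refine (hK (T^[k] y) y _ ((hsymm _ _).trans_le hy) ?_).le
    exact (hT.iterate hφ k _ _).trans ((hφ.iterate k ih).trans hk)

theorem IsPhiContraction.dist_iterate_lt (hφ : IsComparison φ) (hT : IsPhiContraction d φ T)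
    (hsymm : ∀ x y, d x y = d y x) {k : ℕ} (hk : 0 < k) {y : X} {η ε : NNReal}
    (hK : ∀ p a b, d p a ≤ η → d p b ≤ η → d a b < ε) (hmul : ∀ j, d y (T^[k * j] y) ≤ η)
    (hnear : ∀ r < k, d y (T^[r] y) ≤ η) (q : ℕ) : d y (T^[q] y) < ε := by
  have hq : T^[q] y = T^[q % k] (T^[k * (q / k)] y) := by
    rw [← Function.iterate_add_apply, Nat.mod_add_div]
  rw [hq]
  refine hK (T^[q % k] y) y _ ((hsymm _ _).trans_le (hnear _ (Nat.mod_lt q hk))) ?_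
  exact (hT.iterate hφ.1 _ _ _).trans ((hφ.1.iterate _ (hmul _)).trans (hφ.iterate_le _ _))

theorem SRegular.sCauchy_iterate (hreg : SRegular d) (hsymm : ∀ x y, d x y = d y x)
    (hrefl : ∀ x, d x x = 0) (hφ : IsComparison φ) (hT : IsPhiContraction d φ T) (x : X) :
    SCauchy d fun n => T^[n] x := by
  intro ε hε
  obtain ⟨η₁, hη₁, hK₁⟩ := hreg ε hε
  obtain ⟨η₂, hη₂, hK₂⟩ := hreg η₁ hη₁
  obtain ⟨η₃, hη₃, hη₃₂, hK₃⟩ := hreg.exists_le hη₂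
  obtain ⟨k, hk, hkη⟩ :=
    ((eventually_gt_atTop 0).and ((hφ.2 η₂).eventually (ge_mem_nhds hη₃))).exists
  obtain ⟨N, hN⟩ := eventually_atTop.1 <| (Finset.eventually_all (Finset.range (k + 1))).2
    fun r _ => (hT.tendsto_iterate hφ x (T^[r] x)).eventually (ge_mem_nhds hη₃)
  set y := T^[N] x
  have hnear : ∀ r ≤ k, d y (T^[r] y) ≤ η₃ := fun r hr => by
    have hcomm : T^[r] y = T^[N] (T^[r] x) := by
      rw [← Function.iterate_add_apply, add_comm, Function.iterate_add_apply]
    exact hcomm ▸ hN N le_rfl r (Finset.mem_range.2 (Nat.lt_succ_of_le hr))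
  have htail : ∀ q, d y (T^[q] y) < η₁ :=
    hT.dist_iterate_lt hφ hsymm hk hK₂
      (hT.dist_iterate_mul_le hφ.1 hsymm hrefl hK₃ hkη (hnear k le_rfl))
      fun r hr => (hnear r hr.le).trans hη₃₂
  have hshift : ∀ n, N ≤ n → T^[n] x = T^[n - N] y := fun n hn => by
    rw [← Function.iterate_add_apply, Nat.sub_add_cancel hn]
  refine ⟨N, fun n m hn hm => ?_⟩
  dsimp only
  rw [hshift n hn, hshift m hm]
  exact hK₁ y _ _ (htail _).le (htail _).le

theorem SRegular.isFixedPt_of_sConv_iterate (hreg : SRegular d) (hd : ∀ x y, d x y = 0 → x = y)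
    (hφ : IsComparison φ) (hT : IsPhiContraction d φ T) {x a : X}
    (ha : SConv d (fun n => T^[n] x) a) : T a = a := by
  have hTa : SConv d (fun n => T^[n + 1] x) (T a) := by
    simpa only [SConv, Function.comp_def, ← Function.iterate_succ_apply' T] using
      hT.sConv_comp hφ ha
  have ha' : SConv d (fun n => T^[n + 1] x) a := ha.comp (tendsto_add_atTop_nat 1)
  exact hTa.unique_of_sRegular hreg hd ha'

end

theorem matkowski_equiv_relaxed_general {X : Type*} [Nonempty X]
    (c : NNReal)
    (d ρ : X → X → NNReal) (hd : IsSemimetric d)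
    (hrel : ∀ x y z : X, ρ x y ≤ c * (ρ x z + ρ z y)) (hcompρ : SComplete ρ)
    (heq : SEquiv d ρ)
    (φ : NNReal → NNReal) (hφ : IsComparison φ)
    (T : X → X) (hT : IsPhiContraction d φ T) :
    ∃! x₀ : X, T x₀ = x₀ := by
  obtain ⟨x⟩ := ‹Nonempty X›
  have hd₀ : ∀ x y, d x y = 0 → x = y := fun x y => (hd.2 x y).1
  have hreg : SRegular d := .of_sEquiv_of_relaxed hd.1 hrel heq
  have hρCauchy : SCauchy ρ fun n => T^[n] x :=
    (hreg.sCauchy_iterate hd.1 (fun x => (hd.2 x x).2 rfl) hφ hT x).of_tendsto_Lmod heq.2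
  obtain ⟨a, hρa⟩ := hcompρ _ hρCauchy
  have hfix : T a = a := hreg.isFixedPt_of_sConv_iterate hd₀ hφ hT (hρa.of_tendsto_Lmod heq.1)
  exact ⟨a, hfix, fun y hy => hT.eq_of_isFixedPt hφ hd₀ hy hfix⟩

theorem matkowski_equiv_relaxed {X : Type*} [Nonempty X]
    (c : NNReal) (hc : 1 ≤ c)
    (d ρ : X → X → NNReal) (hd : IsSemimetric d) (hρ : IsSemimetric ρ)
    (hrel : ∀ x y z : X, ρ x y ≤ c * (ρ x z + ρ z y)) (hcompρ : SComplete ρ)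
    (heq : SEquiv d ρ)
    (φ : NNReal → NNReal) (hφ : IsComparison φ)
    (T : X → X) (hT : IsPhiContraction d φ T) :
    ∃! x₀ : X, T x₀ = x₀ :=
  matkowski_equiv_relaxed_general c d ρ hd hrel hcompρ heq φ hφ T hT
end
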